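/- arXiv:1401.4250 — 8 statements merged into one kernel-verified Lean document; each statement's English description precedes it below -/
import Mathlib

section
/- A finite monoid M is R-trivial if and only if (x*y)^ω * x = (x*y)^ω for all x, y in M, where (x*y)^ω denotes the unique idempotent power of x*y. -/
lemma exists_idem_pow {M : Type*} [Monoid M] [Finite M] (s : M) :
    ∃ n : ℕ, 0 < n ∧ IsIdempotentElem (s ^ n) := by
  obtain ⟨a, b, hne, hab⟩ := Finite.exists_ne_map_eq_of_infinite (fun n : ℕ => s ^ n)
  wlog hlt : a < b generalizing a b
  · exact this b a hne.symm hab.symm (by omega)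
  set p := b - a with hp
  have hp0 : 0 < p := by omega
  have hb : b = a + p := by omega
  have key : ∀ t : ℕ, s ^ (a + t * p) = s ^ a := by
    intro t
    induction t with
    | zero => simp
    | succ t ih =>
      have : a + (t + 1) * p = (a + t * p) + p := by ring
      rw [this, pow_add, ih, ← pow_add, ← hb, hab]
  have key2 : ∀ m t : ℕ, a ≤ m → s ^ (m + t * p) = s ^ m := by
    intro m t hm
    have h1 : m + t * p = (m - a) + (a + t * p) := by omega
    have h2 : m = (m - a) + a := by omega
    rw [h1, pow_add, key, ← pow_add, ← h2]
  refine ⟨(a + 1) * p, by positivity, ?_⟩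
  show s ^ ((a+1)*p) * s ^ ((a+1)*p) = s ^ ((a+1)*p)
  rw [← pow_add]
  have h3 : (a+1)*p + (a+1)*p = (a+1)*p + (a+1) * p := rfl
  exact key2 ((a+1)*p) (a+1) (by nlinarith)

/-- A finite monoid `M` is R-trivial if and only if `(x*y)^ω * x = (x*y)^ω` for all `x, y ∈ M`,
where `(x*y)^ω` denotes the (unique) idempotent positive power of `x*y`. -/
theorem rTrivial_iff_omega_power {M : Type*} [Monoid M] [Finite M] :
    (∀ m m' : M, {z : M | ∃ t : M, m * t = z} = {z : M | ∃ t : M, m' * t = z} → m = m') ↔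
      (∀ x y : M, ∀ n : ℕ, 0 < n → IsIdempotentElem ((x * y) ^ n) →
        (x * y) ^ n * x = (x * y) ^ n) := by
  constructor
  · intro hR x y n hn hid
    set e := (x * y) ^ n with he
    apply hR
    ext z
    simp only [Set.mem_setOf_eq]
    constructor
    · rintro ⟨t, rfl⟩
      exact ⟨x * t, by rw [← mul_assoc]⟩
    · rintro ⟨t, rfl⟩
      refine ⟨y * (x * y) ^ (n - 1) * t, ?_⟩
      have key : e * x * (y * (x * y) ^ (n - 1)) = e := by
        rw [mul_assoc e x, ← mul_assoc x y, ← pow_succ']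
        have hn1 : n - 1 + 1 = n := by omega
        rw [hn1, ← he, hid]
      rw [← mul_assoc, ← mul_assoc, mul_assoc (e*x) y ((x*y)^(n-1)), key]
  · intro h m m' hset
    have h1 : m' ∈ {z : M | ∃ t : M, m' * t = z} := ⟨1, mul_one _⟩
    rw [← hset] at h1
    obtain ⟨v, hv⟩ := h1
    have h2 : m ∈ {z : M | ∃ t : M, m * t = z} := ⟨1, mul_one _⟩
    rw [hset] at h2
    obtain ⟨u, hu⟩ := h2
    -- m = m' * u = m * v * u
    have hm : m * (v * u) = m := by rw [← mul_assoc, hv, hu]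
    have hmk : ∀ k : ℕ, m * (v * u) ^ k = m := by
      intro k
      induction k with
      | zero => simp
      | succ k ih => rw [pow_succ, ← mul_assoc, ih, hm]
    obtain ⟨n, hn, hid⟩ := exists_idem_pow (v * u)
    have hkey := h v u n hn hid
    calc m = m * (v * u) ^ n * v := by rw [mul_assoc, hkey, hmk]
    _ = m' := by rw [hmk, hv]
end

section
/- If I is the minimal ideal of a finite monoid M and e ∈ I is idempotent, then e*M*e is a group with identity e. -/
/-- `I` is a (two-sided) ideal of the monoid `M`: a non-empty subset with `M*I*M ⊆ I`. -/
def IsMonoidIdeal {M : Type*} [Monoid M] (I : Set M) : Prop :=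
  I.Nonempty ∧ ∀ m ∈ I, ∀ a b : M, a * m * b ∈ I

/-- If `I` is the minimal ideal of a finite monoid `M` and `e ∈ I` is idempotent, then
`e*M*e` is a group with identity `e`: it is closed under multiplication, `e` is a two-sided
identity on it, and every element has a two-sided inverse in it. -/
theorem minimal_ideal_eMe_group {M : Type*} [Monoid M] [Finite M] (I : Set M)
    (hI : IsMonoidIdeal I) (hmin : ∀ J : Set M, IsMonoidIdeal J → J ⊆ I → J = I)
    (e : M) (he : e ∈ I) (hidem : e * e = e) :
    (∀ x ∈ {z : M | ∃ m : M, e * m * e = z}, ∀ y ∈ {z : M | ∃ m : M, e * m * e = z},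
        x * y ∈ {z : M | ∃ m : M, e * m * e = z}) ∧
    (∀ x ∈ {z : M | ∃ m : M, e * m * e = z}, e * x = x ∧ x * e = x) ∧
    (∀ x ∈ {z : M | ∃ m : M, e * m * e = z},
        ∃ y ∈ {z : M | ∃ m : M, e * m * e = z}, x * y = e ∧ y * x = e) := by
  set S := {z : M | ∃ m : M, e * m * e = z} with hS
  have h1 : ∀ y : M, e * (e * y) = e * y := fun y => by rw [← mul_assoc, hidem]
  have hmul : ∀ x ∈ S, ∀ y ∈ S, x * y ∈ S := by
    rintro x ⟨m, rfl⟩ y ⟨m', rfl⟩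
    exact ⟨m * e * (e * m'), by simp only [mul_assoc]⟩
  have hidl : ∀ x ∈ S, e * x = x ∧ x * e = x := by
    rintro x ⟨m, rfl⟩
    constructor
    · rw [← mul_assoc, ← mul_assoc, hidem]
    · rw [mul_assoc, mul_assoc, hidem, ← mul_assoc]
  refine ⟨hmul, hidl, ?_⟩
  rintro x hx
  -- x ∈ I
  have hxI : x ∈ I := by
    obtain ⟨m, rfl⟩ := hx
    have := hI.2 e he (e * m) 1
    rwa [mul_one] at this
  -- ideal generated by x
  set J : Set M := {z : M | ∃ a b : M, a * x * b = z} with hJ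
  have hJideal : IsMonoidIdeal J := by
    constructor
    · exact ⟨x, 1, 1, by rw [one_mul, mul_one]⟩
    · rintro m ⟨a, b, rfl⟩ c d
      exact ⟨c * a, b * d, by simp only [mul_assoc]⟩
  have hJsub : J ⊆ I := by
    rintro z ⟨a, b, rfl⟩
    exact hI.2 x hxI a b
  have heJ : e ∈ J := (hmin J hJideal hJsub).symm ▸ he
  obtain ⟨a, b, hab⟩ := heJ
  set u := e * a * e with hu
  set v := e * b * e with hv
  have huS : u ∈ S := ⟨a, rfl⟩
  have hvS : v ∈ S := ⟨b, rfl⟩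
  have key : u * x * v = e := by
    obtain ⟨m, rfl⟩ := hx
    have h2 : e * a * e * (e * m * e) * (e * b * e) = e * (a * (e * m * e) * b) * e := by
      simp only [mul_assoc, h1]
    rw [h2, hab, hidem, hidem]
  clear_value u v
  have hSfin : S.Finite := Set.toFinite S
  -- right inverse: x * (v * u) = e
  have hxvu : x * (v * u) = e := by
    set t := x * v with ht
    have htS : t ∈ S := hmul x hx v hvS
    have hut : u * t = e := by rw [ht, ← mul_assoc]; exact key
    have hinj : Set.InjOn (fun s => t * s) S := by
      intro s hs s' hs' h
      have : u * (t * s) = u * (t * s') := by simp only at h; rw [h]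
      rwa [← mul_assoc, hut, (hidl s hs).1, ← mul_assoc, hut, (hidl s' hs').1] at this
    have hmaps : Set.MapsTo (fun s => t * s) S S := fun s hs => hmul t htS s hs
    have hbij := (hSfin.injOn_iff_bijOn_of_mapsTo hmaps).mp hinj
    obtain ⟨w, hwS, hw⟩ := hbij.surjOn ⟨1, by rw [mul_one, hidem]⟩
    simp only at hw
    -- hw : t * w = e ; show w = u
    have hwu : w = u := by
      have : u * (t * w) = u * e := by rw [hw]
      rwa [← mul_assoc, hut, (hidl w hwS).1, (hidl u huS).2] at this
    rw [hwu] at hw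
    rw [← mul_assoc]; exact hw
  -- left inverse: (v * u) * x = e
  have hvux : (v * u) * x = e := by
    set t := u * x with ht
    have htS : t ∈ S := hmul u huS x hx
    have htv : t * v = e := by rw [ht]; exact key
    have hinj : Set.InjOn (fun s => s * t) S := by
      intro s hs s' hs' h
      have : (s * t) * v = (s' * t) * v := by simp only at h; rw [h]
      rwa [mul_assoc, htv, (hidl s hs).2, mul_assoc, htv, (hidl s' hs').2] at this
    have hmaps : Set.MapsTo (fun s => s * t) S S := fun s hs => hmul s hs t htS
    have hbij := (hSfin.injOn_iff_bijOn_of_mapsTo hmaps).mp hinj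
    obtain ⟨w, hwS, hw⟩ := hbij.surjOn ⟨1, by rw [mul_one, hidem]⟩
    simp only at hw
    have hwv : w = v := by
      have : (w * t) * v = e * v := by rw [hw]
      rwa [mul_assoc, htv, (hidl w hwS).2, (hidl v hvS).1] at this
    rw [hwv] at hw
    rw [mul_assoc]; exact hw
  exact ⟨v * u, hmul v hvS u huS, hxvu, hvux⟩
end

section
/- Let a finite monoid M act transitively on a finite set Ω and suppose the minimal ideal I of M is aperiodic (i.e., e*M*e = {e} for every idempotent e ∈ I, equivalently every idempotent in I acts as a constant). Then every element of I acts on Ω as a constant map, and every constant map on Ω is realized by some element of I. -/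
/-- In a finite monoid, every element has an idempotent positive power. -/
lemma exists_idempotent_pow {M : Type*} [Monoid M] [Finite M] (m : M) :
    ∃ n : ℕ, 1 ≤ n ∧ m ^ n * m ^ n = m ^ n := by
  obtain ⟨a, b, hne, hab⟩ := Finite.exists_ne_map_eq_of_infinite (fun n : ℕ => m ^ n)
  wlog hlt : a < b generalizing a b
  · exact this b a hne.symm hab.symm (by omega)
  set p := b - a with hp
  have hp1 : 1 ≤ p := by omega
  have hstep : ∀ c, a ≤ c → m ^ (c + p) = m ^ c := by
    intro c hc
    have : m ^ (c + p) = m ^ (c - a) * m ^ b := by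
      rw [← pow_add]; congr 1; omega
    rw [this, ← hab, ← pow_add]
    congr 1; omega
  have hiter : ∀ k c, a ≤ c → m ^ (c + k * p) = m ^ c := by
    intro k
    induction k with
    | zero => simp
    | succ k ih =>
      intro c hc
      have : c + (k + 1) * p = (c + p) + k * p := by ring
      rw [this, ih (c + p) (by omega), hstep c hc]
  refine ⟨(a + 1) * p, by nlinarith, ?_⟩
  rw [← pow_add]
  have h1 : a ≤ (a + 1) * p := by nlinarith
  have : (a + 1) * p + (a + 1) * p = (a + 1) * p + (a + 1) * p := rfl
  exact hiter (a + 1) ((a + 1) * p) h1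

/-- Let a finite monoid `M` act transitively on a finite nonempty set `Ω`, and suppose the
minimal ideal `I` of `M` is aperiodic (every idempotent `e ∈ I` satisfies `e*M*e = {e}`).
Then every element of `I` acts as a constant map on `Ω`, and every constant map on `Ω` is
realized by some element of `I`. -/
theorem aperiodic_minimal_ideal_constants {M Ω : Type*} [Monoid M] [Finite M]
    [Fintype Ω] [Nonempty Ω] [MulAction M Ω]
    (htrans : ∀ α β : Ω, ∃ m : M, m • α = β)
    (I : Set M) (hI : IsMonoidIdeal I)
    (hmin : ∀ J : Set M, IsMonoidIdeal J → J ⊆ I → J = I)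
    (haper : ∀ e ∈ I, e * e = e → ∀ m : M, e * m * e = e) :
    (∀ m ∈ I, ∃ ω : Ω, ∀ α : Ω, m • α = ω) ∧
    (∀ ω : Ω, ∃ m ∈ I, ∀ α : Ω, m • α = ω) := by
  obtain ⟨m₀, hm₀⟩ := hI.1
  -- powers of an element of I stay in I
  have hpow : ∀ m ∈ I, ∀ n : ℕ, 1 ≤ n → m ^ n ∈ I := by
    intro m hm n hn
    induction n with
    | zero => omega
    | succ k ih =>
      rcases Nat.eq_or_lt_of_le hn with h | h
      · rw [← h]; simpa using hm
      · have hk : 1 ≤ k := by omega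
        have := hI.2 (m ^ k) (ih hk) 1 m
        simpa [pow_succ] using this
  -- get an idempotent e ∈ I
  obtain ⟨n, hn1, hidem⟩ := exists_idempotent_pow m₀
  set e := m₀ ^ n with he
  have heI : e ∈ I := hpow m₀ hm₀ n hn1
  -- e acts as a constant
  obtain ⟨α₀⟩ := ‹Nonempty Ω›
  set ω₀ : Ω := e • α₀ with hω₀
  have hconst : ∀ β : Ω, e • β = ω₀ := by
    intro β
    obtain ⟨t, ht⟩ := htrans (e • α₀) β
    have := haper e heI hidem t
    calc e • β = e • (t • (e • α₀)) := by rw [ht]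
      _ = (e * t * e) • α₀ := by rw [mul_smul, mul_smul]
      _ = e • α₀ := by rw [this]
  -- I = M e M
  have hMeM : I = {x : M | ∃ a b : M, x = a * e * b} := by
    have hne : e ∈ {x : M | ∃ a b : M, x = a * e * b} := ⟨1, 1, by simp⟩
    refine (hmin _ ⟨⟨e, hne⟩, ?_⟩ ?_).symm
    · rintro x ⟨a, b, rfl⟩ c d
      exact ⟨c * a, b * d, by noncomm_ring⟩
    · rintro x ⟨a, b, rfl⟩
      exact hI.2 e heI a b
  constructor
  · intro m hm
    rw [hMeM] at hm
    obtain ⟨a, b, rfl⟩ := hm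
    refine ⟨a • ω₀, fun α => ?_⟩
    rw [mul_smul, mul_smul, hconst (b • α)]
  · intro ω
    obtain ⟨t, ht⟩ := htrans ω₀ ω
    refine ⟨t * e, by simpa using hI.2 e heI t 1, fun α => ?_⟩
    rw [mul_smul, hconst α, ht]
end

section
/- Let M be a finite monoid whose minimal ideal is a left zero semigroup I, and let P be an adapted probability on M (the submonoid generated by the support of P contains I). Then for each m ∈ I the sequence P^{*n}(m) is non-decreasing in n, and for each m ∉ I the sequence P^{*n}(m) converges to 0; consequently P^{*n} converges to a probability π supported on I. -/
/-- Convolution of two functions on a finite monoid: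
`(f * g)(m) = ∑_{x*y = m} f(x) * g(y)`. -/
noncomputable def mconv {M : Type*} [Monoid M] [Fintype M] [DecidableEq M]
    (f g : M → ℝ) : M → ℝ :=
  fun m => ∑ x : M, ∑ y : M, if x * y = m then f x * g y else 0

/-- The `n`-th convolution power `P^{*n}` of a probability `P` on a finite monoid. -/
noncomputable def mconvPow {M : Type*} [Monoid M] [Fintype M] [DecidableEq M]
    (P : M → ℝ) : ℕ → M → ℝ
  | 0 => fun m => if m = 1 then 1 else 0
  | n + 1 => mconv (mconvPow P n) P

set_option linter.unusedSectionVars false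
set_option linter.unusedVariables false

section Aux
variable {M : Type*} [Monoid M] [Fintype M] [DecidableEq M]

lemma ite_nonneg'' {c : Prop} [Decidable c] {a : ℝ} (h : 0 ≤ a) :
    0 ≤ if c then a else 0 := by
  split
  · exact h
  · exact le_rfl

lemma mconv_nonneg {f g : M → ℝ} (hf : ∀ m, 0 ≤ f m) (hg : ∀ m, 0 ≤ g m) :
    ∀ m, 0 ≤ mconv f g m := by
  intro m
  refine Finset.sum_nonneg fun x _ => Finset.sum_nonneg fun y _ => ?_
  split
  · exact mul_nonneg (hf x) (hg y)
  · exact le_rfl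

lemma sum_mconv (f g : M → ℝ) :
    ∑ m : M, mconv f g m = (∑ x : M, f x) * (∑ y : M, g y) := by
  unfold mconv
  rw [Finset.sum_comm, Finset.sum_mul]
  refine Finset.sum_congr rfl fun x _ => ?_
  rw [Finset.sum_comm, Finset.mul_sum]
  refine Finset.sum_congr rfl fun y _ => ?_
  simp

lemma le_mconv {f g : M → ℝ} (hf : ∀ m, 0 ≤ f m) (hg : ∀ m, 0 ≤ g m) (x y : M) :
    f x * g y ≤ mconv f g (x * y) := by
  unfold mconv
  refine le_trans ?_ (Finset.single_le_sum
    (f := fun x' => ∑ y' : M, if x' * y' = x * y then f x' * g y' else 0)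
    (fun i _ => Finset.sum_nonneg fun j _ => by
      split
      · exact mul_nonneg (hf i) (hg j)
      · exact le_rfl) (Finset.mem_univ x))
  refine le_trans ?_ (Finset.single_le_sum
    (f := fun y' => if x * y' = x * y then f x * g y' else 0)
    (fun j _ => by
      split
      · exact mul_nonneg (hf x) (hg j)
      · exact le_rfl) (Finset.mem_univ y))
  simp

lemma ite_sum_zero {α : Type*} (s : Finset α) {c : Prop} [Decidable c] (F : α → ℝ) :
    (if c then ∑ i ∈ s, F i else 0) = ∑ i ∈ s, (if c then F i else 0) := by
  split <;> simp

lemma sum3_rot (F : M → M → M → ℝ) :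
    (∑ x : M, ∑ a : M, ∑ b : M, F x a b) = ∑ a : M, ∑ b : M, ∑ x : M, F x a b := by
  rw [Finset.sum_comm]
  exact Finset.sum_congr rfl fun a _ => Finset.sum_comm

lemma sum4_rot' (F : M → M → M → M → ℝ) :
    (∑ x : M, ∑ y : M, ∑ a : M, ∑ b : M, F x y a b)
      = ∑ x : M, ∑ a : M, ∑ b : M, ∑ y : M, F x y a b :=
  Finset.sum_congr rfl fun x _ => sum3_rot _

lemma sum4_rot (F : M → M → M → M → ℝ) :
    (∑ x : M, ∑ y : M, ∑ a : M, ∑ b : M, F x y a b)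
      = ∑ y : M, ∑ a : M, ∑ b : M, ∑ x : M, F x y a b := by
  rw [Finset.sum_comm]
  exact Finset.sum_congr rfl fun y _ => sum3_rot _

lemma collapse1 (y m e : M) (v : ℝ) :
    (∑ x : M, if x * y = m then (if e = x then v else 0) else 0) = if e * y = m then v else 0 := by
  rw [Finset.sum_eq_single e]
  · simp
  · intro x _ hx
    simp [Ne.symm hx]
  · simp

lemma collapse2 (x m e : M) (v : ℝ) :
    (∑ y : M, if x * y = m then (if e = y then v else 0) else 0) = if x * e = m then v else 0 := by
  rw [Finset.sum_eq_single e]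
  · simp
  · intro y _ hy
    simp [Ne.symm hy]
  · simp

lemma mconv_assoc (f g h : M → ℝ) : mconv (mconv f g) h = mconv f (mconv g h) := by
  funext m
  unfold mconv
  simp only [Finset.sum_mul, Finset.mul_sum, ite_mul, mul_ite, zero_mul, mul_zero]
  simp_rw [ite_sum_zero]
  rw [sum4_rot]
  conv_rhs => rw [sum4_rot']
  simp_rw [collapse1, collapse2]
  rw [sum3_rot]
  refine Finset.sum_congr rfl fun a _ => Finset.sum_congr rfl fun b _ =>
    Finset.sum_congr rfl fun c _ => ?_
  simp [mul_assoc]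


lemma mconv_one (f : M → ℝ) : mconv f (mconvPow P 0) = f := by
  funext m
  show (∑ x : M, ∑ y : M, if x * y = m then f x * (if y = 1 then (1:ℝ) else 0) else 0) = f m
  have h : ∀ x : M, (∑ y : M, if x * y = m then f x * (if y = 1 then (1:ℝ) else 0) else 0)
      = if x = m then f x else 0 := by
    intro x
    rw [Finset.sum_eq_single 1]
    · simp
    · intro y _ hy
      simp [hy]
    · simp
  simp_rw [h]
  simp

lemma mconvPow_add (P : M → ℝ) (n k : ℕ) :
    mconvPow P (n + k) = mconv (mconvPow P n) (mconvPow P k) := by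
  induction k with
  | zero => rw [Nat.add_zero, mconv_one]
  | succ k ih =>
    show mconvPow P ((n + k) + 1) = _
    rw [show mconvPow P ((n+k)+1) = mconv (mconvPow P (n+k)) P from rfl, ih, mconv_assoc]
    rfl

lemma mconvPow_nonneg (P : M → ℝ) (hP0 : ∀ m, 0 ≤ P m) : ∀ n m, 0 ≤ mconvPow P n m := by
  intro n
  induction n with
  | zero =>
    intro m
    show (0:ℝ) ≤ if m = 1 then 1 else 0
    split <;> norm_num
  | succ n ih => exact mconv_nonneg ih hP0

lemma sum_mconvPow (P : M → ℝ) (hP1 : ∑ m : M, P m = 1) :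
    ∀ n, ∑ m : M, mconvPow P n m = 1 := by
  intro n
  induction n with
  | zero => simp [mconvPow]
  | succ n ih =>
    show ∑ m : M, mconv (mconvPow P n) P m = 1
    rw [sum_mconv, ih, hP1, mul_one]

lemma mconvPow_le_one (P : M → ℝ) (hP0 : ∀ m, 0 ≤ P m) (hP1 : ∑ m : M, P m = 1)
    (n : ℕ) (m : M) : mconvPow P n m ≤ 1 := by
  rw [← sum_mconvPow P hP1 n]
  exact Finset.single_le_sum (fun i _ => mconvPow_nonneg P hP0 n i) (Finset.mem_univ m)

lemma mconvPow_mono (P : M → ℝ) (hP0 : ∀ m, 0 ≤ P m) (hP1 : ∑ m : M, P m = 1)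
    {m : M} (hm : ∀ t : M, m * t = m) :
    Monotone fun n => mconvPow P n m := by
  apply monotone_nat_of_le_succ
  intro n
  show mconvPow P n m ≤ mconv (mconvPow P n) P m
  calc mconvPow P n m = ∑ y : M, if m * y = m then mconvPow P n m * P y else 0 := by
        simp only [hm, if_true]
        rw [← Finset.mul_sum, hP1, mul_one]
    _ ≤ ∑ x : M, ∑ y : M, if x * y = m then mconvPow P n x * P y else 0 := by
        refine Finset.single_le_sum
          (f := fun x => ∑ y : M, if x * y = m then mconvPow P n x * P y else 0)
          (fun i _ => Finset.sum_nonneg fun j _ =>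
            ite_nonneg'' (mul_nonneg (mconvPow_nonneg P hP0 n i) (hP0 j))) (Finset.mem_univ m)
    _ = mconv (mconvPow P n) P m := rfl

lemma mconvPow_pos_of_list (P : M → ℝ) (hP0 : ∀ m, 0 ≤ P m) :
    ∀ l : List M, (∀ x ∈ l, 0 < P x) → 0 < mconvPow P l.length l.prod := by
  intro l
  induction l using List.reverseRecOn with
  | nil =>
    intro _
    show (0:ℝ) < if (1:M) = 1 then 1 else 0
    simp
  | append_singleton l a ih =>
    intro hpos
    have h1 : 0 < mconvPow P l.length l.prod :=
      ih fun x hx => hpos x (List.mem_append_left _ hx)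
    have h2 : 0 < P a := hpos a (by simp)
    calc (0:ℝ) < mconvPow P l.length l.prod * P a := mul_pos h1 h2
      _ ≤ mconv (mconvPow P l.length) P (l.prod * a) :=
          le_mconv (mconvPow_nonneg P hP0 l.length) hP0 _ _
      _ = mconvPow P (l ++ [a]).length ((l ++ [a]).prod) := by
          simp [mconvPow]


lemma contraction {I : Set M} [DecidablePred (· ∈ I)]
    (hIdeal : ∀ m ∈ I, ∀ a b : M, a * m * b ∈ I)
    (hlz : ∀ m ∈ I, ∀ t : M, m * t = m)
    {m₀ : M} (hm₀ : m₀ ∈ I)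
    (P : M → ℝ) (hP0 : ∀ m, 0 ≤ P m) (hP1 : ∑ m : M, P m = 1) (n k : ℕ) :
    ∑ m ∈ Finset.univ.filter (fun m => m ∉ I), mconvPow P (n + k) m
      ≤ (1 - mconvPow P k m₀) * ∑ m ∈ Finset.univ.filter (fun m => m ∉ I), mconvPow P n m := by
  have hPn0 := mconvPow_nonneg P hP0 n
  have hPk0 := mconvPow_nonneg P hP0 k
  have step1 : ∑ m ∈ Finset.univ.filter (fun m => m ∉ I), mconvPow P (n + k) m
      = ∑ x : M, ∑ w : M,
          if x * w ∉ I then mconvPow P n x * mconvPow P k w else 0 := by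
    rw [mconvPow_add]
    simp only [mconv]
    rw [Finset.sum_comm]
    refine Finset.sum_congr rfl fun x _ => ?_
    rw [Finset.sum_comm]
    refine Finset.sum_congr rfl fun w _ => ?_
    rw [Finset.sum_ite_eq]
    simp
  have step2 : ∀ x w : M, (if x * w ∉ I then mconvPow P n x * mconvPow P k w else 0)
      ≤ if x ∉ I then mconvPow P n x * (if w = m₀ then 0 else mconvPow P k w) else 0 := by
    intro x w
    by_cases hx : x ∈ I
    · have hxw : x * w = x := hlz x hx w
      simp [hx, hxw]
    · by_cases hw : w = m₀
      · have hxm : x * w ∈ I := by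
          rw [hw]
          simpa using hIdeal m₀ hm₀ x 1
        rw [← hw]
        simp [hx, hxm]
      · rw [if_neg hw, if_pos hx]
        split
        · exact le_rfl
        · exact mul_nonneg (hPn0 x) (hPk0 w)
  have hsum : (∑ w : M, if w = m₀ then (0:ℝ) else mconvPow P k w)
      = 1 - mconvPow P k m₀ := by
    have h : ∀ w : M, (if w = m₀ then (0:ℝ) else mconvPow P k w)
        = mconvPow P k w - (if w = m₀ then mconvPow P k w else 0) := by
      intro w
      split <;> simp
    simp_rw [h]
    rw [Finset.sum_sub_distrib, sum_mconvPow P hP1]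
    simp
  have step3 : (∑ x : M, ∑ w : M,
        if x ∉ I then mconvPow P n x * (if w = m₀ then 0 else mconvPow P k w) else 0)
      = (1 - mconvPow P k m₀) * ∑ m ∈ Finset.univ.filter (fun m => m ∉ I), mconvPow P n m := by
    have h : ∀ x : M, (∑ w : M,
        if x ∉ I then mconvPow P n x * (if w = m₀ then 0 else mconvPow P k w) else 0)
        = if x ∉ I then mconvPow P n x * (1 - mconvPow P k m₀) else 0 := by
      intro x
      by_cases hx : x ∈ I
      · simp [hx]
      · rw [if_pos hx]
        simp_rw [if_pos hx]
        rw [← Finset.mul_sum, hsum]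
    simp_rw [h]
    rw [← Finset.sum_filter, ← Finset.sum_mul, mul_comm]
  calc ∑ m ∈ Finset.univ.filter (fun m => m ∉ I), mconvPow P (n + k) m
      = ∑ x : M, ∑ w : M,
          if x * w ∉ I then mconvPow P n x * mconvPow P k w else 0 := step1
    _ ≤ ∑ x : M, ∑ w : M,
          if x ∉ I then mconvPow P n x * (if w = m₀ then 0 else mconvPow P k w) else 0 :=
        Finset.sum_le_sum fun x _ => Finset.sum_le_sum fun w _ => step2 x w
    _ = _ := step3

end Aux

/-- If `M` is a finite monoid whose minimal ideal `I` is a left zero semigroup, and `P` is an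
adapted probability on `M`, then `P^{*n}(m)` is non-decreasing in `n` for `m ∈ I`, tends to `0`
for `m ∉ I`, and `P^{*n}` converges pointwise to a probability `π` supported on `I`. -/
theorem convPow_converges {M : Type*} [Monoid M] [Fintype M] [DecidableEq M]
    (I : Set M) (hI : IsMonoidIdeal I)
    (hmin : ∀ J : Set M, IsMonoidIdeal J → J ⊆ I → J = I)
    (hlz : ∀ m ∈ I, ∀ t : M, m * t = m)
    (P : M → ℝ) (hP0 : ∀ m, 0 ≤ P m) (hP1 : ∑ m : M, P m = 1)
    (hadapted : I ⊆ (Submonoid.closure {m : M | 0 < P m} : Set M)) :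
    (∀ m ∈ I, Monotone fun n => mconvPow P n m) ∧
    (∀ m ∉ I, Filter.Tendsto (fun n => mconvPow P n m) Filter.atTop (nhds 0)) ∧
    (∃ π : M → ℝ, (∀ m, 0 ≤ π m) ∧ (∑ m : M, π m = 1) ∧ (∀ m, m ∉ I → π m = 0) ∧
      ∀ m : M, Filter.Tendsto (fun n => mconvPow P n m) Filter.atTop (nhds (π m))) := by
  classical
  obtain ⟨hne, hIdeal⟩ := hI
  have mono : ∀ m ∈ I, Monotone fun n => mconvPow P n m := fun m hm =>
    mconvPow_mono P hP0 hP1 (hlz m hm)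
  obtain ⟨m₀, hm₀⟩ := hne
  obtain ⟨l, hl, hlp⟩ := Submonoid.exists_list_of_mem_closure (hadapted hm₀)
  have hpos : 0 < mconvPow P l.length m₀ := by
    rw [← hlp]
    exact mconvPow_pos_of_list P hP0 l hl
  set k₀ := l.length + 1 with hk₀def
  have hδpos : 0 < mconvPow P k₀ m₀ :=
    lt_of_lt_of_le hpos (mono m₀ hm₀ (Nat.le_succ _))
  set δ := mconvPow P k₀ m₀ with hδdef
  have hδ1 : δ ≤ 1 := mconvPow_le_one P hP0 hP1 k₀ m₀
  set S := fun n => ∑ m ∈ Finset.univ.filter (fun m => m ∉ I), mconvPow P n m with hSdef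
  have hS0 : ∀ n, 0 ≤ S n := fun n =>
    Finset.sum_nonneg fun i _ => mconvPow_nonneg P hP0 n i
  have hcon : ∀ n k, S (n + k) ≤ (1 - mconvPow P k m₀) * S n := fun n k =>
    contraction hIdeal hlz hm₀ P hP0 hP1 n k
  have hanti : ∀ a b : ℕ, a ≤ b → S b ≤ S a := by
    intro a b hab
    have h := hcon a (b - a)
    rw [Nat.add_sub_cancel' hab] at h
    calc S b ≤ (1 - mconvPow P (b - a) m₀) * S a := h
      _ ≤ 1 * S a := by
          apply mul_le_mul_of_nonneg_right _ (hS0 a)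
          linarith [mconvPow_nonneg P hP0 (b - a) m₀]
      _ = S a := one_mul _
  have hgeom : ∀ q r : ℕ, S (q * k₀ + r) ≤ (1 - δ) ^ q * S r := by
    intro q
    induction q with
    | zero => intro r; simp
    | succ q ih =>
      intro r
      have h1 : S ((q + 1) * k₀ + r) ≤ (1 - δ) * S (q * k₀ + r) := by
        have h := hcon (q * k₀ + r) k₀
        have heq : q * k₀ + r + k₀ = (q + 1) * k₀ + r := by ring
        rw [heq] at h
        exact h
      calc S ((q + 1) * k₀ + r) ≤ (1 - δ) * S (q * k₀ + r) := h1
        _ ≤ (1 - δ) * ((1 - δ) ^ q * S r) := by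
            apply mul_le_mul_of_nonneg_left (ih r)
            linarith
        _ = (1 - δ) ^ (q + 1) * S r := by ring
  have hbound : ∀ n, S n ≤ (1 - δ) ^ (n / k₀) * S 0 := by
    intro n
    have h1 : S n ≤ S (n / k₀ * k₀) := hanti _ _ (Nat.div_mul_le_self n k₀)
    have h2 : S (n / k₀ * k₀ + 0) ≤ (1 - δ) ^ (n / k₀) * S 0 := hgeom _ 0
    rw [Nat.add_zero] at h2
    exact le_trans h1 h2
  have hSto : Filter.Tendsto S Filter.atTop (nhds 0) := by
    have h3 : Filter.Tendsto (fun q : ℕ => (1 - δ) ^ q) Filter.atTop (nhds 0) :=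
      tendsto_pow_atTop_nhds_zero_of_lt_one (by linarith) (by linarith)
    have h4 : Filter.Tendsto (fun n : ℕ => n / k₀) Filter.atTop Filter.atTop := by
      apply Filter.tendsto_atTop_atTop.mpr
      intro b
      refine ⟨b * k₀, fun n hn => ?_⟩
      exact (Nat.le_div_iff_mul_le (Nat.succ_pos _)).mpr hn
    have h5 := (h3.comp h4).mul_const (S 0)
    rw [zero_mul] at h5
    exact squeeze_zero hS0 hbound h5
  have part2 : ∀ m ∉ I, Filter.Tendsto (fun n => mconvPow P n m) Filter.atTop (nhds 0) := by
    intro m hm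
    refine squeeze_zero (fun n => mconvPow_nonneg P hP0 n m) (fun n => ?_) hSto
    exact Finset.single_le_sum (fun i _ => mconvPow_nonneg P hP0 n i) (by simp [hm])
  refine ⟨mono, part2, ?_⟩
  set π : M → ℝ := fun m => if m ∈ I then ⨆ n, mconvPow P n m else 0 with hπdef
  have hbdd : ∀ m : M, BddAbove (Set.range fun n => mconvPow P n m) := by
    intro m
    refine ⟨1, ?_⟩
    rintro x ⟨n, rfl⟩
    exact mconvPow_le_one P hP0 hP1 n m
  have hconv : ∀ m : M, Filter.Tendsto (fun n => mconvPow P n m)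
      Filter.atTop (nhds (π m)) := by
    intro m
    by_cases hm : m ∈ I
    · rw [hπdef]
      simp only [hm, if_true]
      exact tendsto_atTop_ciSup (mono m hm) (hbdd m)
    · rw [hπdef]
      simp only [hm, if_false]
      exact part2 m hm
  refine ⟨π, ?_, ?_, ?_, hconv⟩
  · intro m
    exact ge_of_tendsto (hconv m)
      (Filter.Eventually.of_forall fun n => mconvPow_nonneg P hP0 n m)
  · have hsum : Filter.Tendsto (fun n => ∑ m : M, mconvPow P n m)
        Filter.atTop (nhds (∑ m : M, π m)) :=
      tendsto_finset_sum _ fun m _ => hconv m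
    have hone : (fun n => ∑ m : M, mconvPow P n m) = fun _ => (1 : ℝ) :=
      funext (sum_mconvPow P hP1)
    rw [hone] at hsum
    exact tendsto_nhds_unique hsum tendsto_const_nhds
  · intro m hm
    rw [hπdef]
    simp [hm]
end

section
/- In the free tree monoid FT(X) on a totally ordered finite alphabet X, the rewriting system consisting of the rules y·u·y → y·u, for y ∈ X and u any reduced word over letters strictly smaller than y (including u empty), is confluent and length-reducing, and presents FT(X). -/
/-- A word is *reduced* for the free tree monoid if no rewriting rule applies to any factor;
equivalently (by induction on length), it contains no factor `y ++ w ++ y` where all letters of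
`w` are strictly smaller than `y`. -/
def FTReduced {X : Type*} [LinearOrder X] (u : List X) : Prop :=
  ¬ ∃ (v w z : List X) (y : X), (∀ a ∈ w, a < y) ∧ u = v ++ [y] ++ w ++ [y] ++ z

/-- One step of the completed rewriting system for the free tree monoid: rewrite a factor
`y ++ w ++ y` to `y ++ w`, where `w` is a reduced word over letters strictly smaller
than `y` (possibly empty). -/
def FTStep {X : Type*} [LinearOrder X] (u v : List X) : Prop :=
  ∃ (p q w : List X) (y : X), (∀ a ∈ w, a < y) ∧ FTReduced w ∧
    u = p ++ [y] ++ w ++ [y] ++ q ∧ v = p ++ [y] ++ w ++ q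

/-- One step of the defining rewriting system of the free tree monoid `FT(X)`:
`x·x → x` and `y·x·y → y·x` whenever `x < y`, applied inside any context. -/
def FTBaseStep {X : Type*} [LinearOrder X] (u v : List X) : Prop :=
  (∃ (p q : List X) (x : X), u = p ++ [x, x] ++ q ∧ v = p ++ [x] ++ q) ∨
  (∃ (p q : List X) (x y : X), x < y ∧ u = p ++ [y, x, y] ++ q ∧ v = p ++ [y, x] ++ q)


/-!
Every rule deletes a letter, so the system terminates and, by Newman's lemma, it suffices to join
critical pairs. Two redexes `y₁ w₁ y₁` and `y₂ w₂ y₂` starting at different positions either are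
disjoint, or share the letter `y₁ = y₂` (then both reducts rewrite to `y wb`, where `wb` is a
normal form of `w₁ w₂`), or the second starts inside `w₁`; the last case is impossible, because
the second redex would either lie inside the reduced word `w₁` or contain `y₁`, forcing
`y₁ < y₂ < y₁`. Redexes starting at the same position coincide, since `y` does not occur in `w`.

The rules follow from the defining relations by induction on `w`:
`y x w y ← y x y w y ~ y x y w → y x w`, where the middle step is the induction hypothesis.
Conversely the defining relations are the rules with `w = []` and `w = [x]`.
-/

open Relation

theorem List.append_cons_eq_append_cons {α : Type*} {a b c d : List α} {x y : α}
    (h : a ++ x :: b = c ++ y :: d) :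
    (a = c ∧ x = y ∧ b = d) ∨ (∃ e, c = a ++ x :: e ∧ b = e ++ y :: d) ∨
      (∃ e, a = c ++ y :: e ∧ d = e ++ x :: b) := by
  rcases List.append_eq_append_iff.1 h with ⟨_ | ⟨z, e⟩, rfl, he⟩ | ⟨_ | ⟨z, e⟩, rfl, he⟩ <;>
    simp_all

theorem Relation.newman {α : Type*} {r : α → α → Prop} (hwf : WellFounded (flip r))
    (hloc : ∀ a b c, r a b → r a c → Join (ReflTransGen r) b c) {a b c : α}
    (hab : ReflTransGen r a b) (hac : ReflTransGen r a c) : Join (ReflTransGen r) b c := by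
  induction a using hwf.induction generalizing b c with
  | _ a ih =>
  rcases hab.cases_head with rfl | ⟨b₁, hab₁, hb₁b⟩
  · exact ⟨c, hac, .refl⟩
  rcases hac.cases_head with rfl | ⟨c₁, hac₁, hc₁c⟩
  · exact ⟨b, .refl, hab⟩
  obtain ⟨d, hb₁d, hc₁d⟩ := hloc a b₁ c₁ hab₁ hac₁
  obtain ⟨e, hbe, hde⟩ := ih b₁ hab₁ hb₁b hb₁d
  obtain ⟨z, hez, hcz⟩ := ih c₁ hac₁ (hc₁d.trans hde) hc₁c
  exact ⟨z, hbe.trans hez, hcz⟩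

section FreeTreeMonoid

variable {X : Type*} [LinearOrder X]

theorem ftReduced_nil : FTReduced ([] : List X) := by
  rintro ⟨v, w, z, y, -, h⟩
  simpa using congrArg List.length h

theorem ftReduced_singleton (x : X) : FTReduced [x] := by
  rintro ⟨v, w, z, y, -, h⟩
  have := congrArg List.length h
  simp at this
  omega

namespace FTStep

variable {u v : List X}

theorem length_lt (h : FTStep u v) : v.length < u.length := by
  obtain ⟨p, q, w, y, -, -, rfl, rfl⟩ := h
  simp

theorem subset (h : FTStep u v) : v ⊆ u := by
  obtain ⟨p, q, w, y, -, -, rfl, rfl⟩ := h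
  intro a
  simp only [List.append_assoc, List.mem_append, List.mem_singleton]
  tauto

theorem append_append (p q : List X) (h : FTStep u v) : FTStep (p ++ u ++ q) (p ++ v ++ q) := by
  obtain ⟨p', q', w, y, hw, hred, rfl, rfl⟩ := h
  exact ⟨p ++ p', q' ++ q, w, y, hw, hred, by simp, by simp⟩

end FTStep

theorem wellFounded_flip_ftStep : WellFounded (flip (FTStep (X := X))) :=
  Subrelation.wf (fun h => FTStep.length_lt h) (measure List.length).wf

section ReflTransGen

variable {u v : List X}

theorem Relation.ReflTransGen.ftStep_subset (h : ReflTransGen FTStep u v) : v ⊆ u := by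
  induction h with
  | refl => exact List.Subset.refl _
  | tail _ hstep ih => exact fun a ha => ih (hstep.subset ha)

theorem Relation.ReflTransGen.ftStep_append_append (p q : List X) (h : ReflTransGen FTStep u v) :
    ReflTransGen FTStep (p ++ u ++ q) (p ++ v ++ q) :=
  h.lift (fun u => p ++ u ++ q) fun _ _ => FTStep.append_append p q

end ReflTransGen

theorem exists_ftStep_of_factor (v w z : List X) (y : X) (hw : ∀ a ∈ w, a < y) :
    ∃ u, FTStep (v ++ [y] ++ w ++ [y] ++ z) u := by
  by_cases hred : FTReduced w
  · exact ⟨_, v, z, w, y, hw, hred, rfl, rfl⟩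
  -- recurse into a shorter factor `y' w' y'` of `w`; an innermost one is a redex
  obtain ⟨v', w', z', y', hw', rfl⟩ := not_not.1 hred
  have : w'.length < (v' ++ [y'] ++ w' ++ [y'] ++ z').length := by simp; omega
  obtain ⟨u, hu⟩ := exists_ftStep_of_factor (v ++ [y] ++ v') w' (z' ++ [y] ++ z) y' hw'
  exact ⟨u, by simpa using hu⟩
termination_by w.length

theorem exists_ftStep_of_not_ftReduced {u : List X} (hu : ¬FTReduced u) : ∃ v, FTStep u v := by
  obtain ⟨v, w, z, y, hw, rfl⟩ := not_not.1 hu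
  exact exists_ftStep_of_factor v w z y hw

theorem exists_reflTransGen_ftStep_ftReduced (u : List X) :
    ∃ v, ReflTransGen FTStep u v ∧ FTReduced v := by
  induction u using (wellFounded_flip_ftStep (X := X)).induction with
  | _ u ih =>
  by_cases hu : FTReduced u
  · exact ⟨u, .refl, hu⟩
  obtain ⟨u', hu'⟩ := exists_ftStep_of_not_ftReduced hu
  obtain ⟨v, hv, hred⟩ := ih u' hu'
  exact ⟨v, .head hu' hv, hred⟩

theorem join_ftStep_of_overlap (w₁ w₂ q : List X) (y : X) (hw₁ : ∀ a ∈ w₁, a < y)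
    (hw₂ : ∀ a ∈ w₂, a < y) (hred₁ : FTReduced w₁) :
    Join (ReflTransGen FTStep) (y :: (w₁ ++ (w₂ ++ y :: q))) (y :: (w₁ ++ y :: (w₂ ++ q))) := by
  obtain ⟨w, hw, hred⟩ := exists_reflTransGen_ftStep_ftReduced (w₁ ++ w₂)
  have hwy : ∀ a ∈ w, a < y := fun a ha => by
    rcases List.mem_append.1 (hw.ftStep_subset ha) with h | h
    exacts [hw₁ a h, hw₂ a h]
  refine ⟨y :: (w ++ q), ?_, ?_⟩
  · have hnorm := hw.ftStep_append_append [y] (y :: q)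
    simp only [List.cons_append, List.append_assoc] at hnorm
    exact hnorm.tail ⟨[], q, w, y, hwy, hred, by simp, by simp⟩
  · have hnorm := hw.ftStep_append_append [y] q
    simp only [List.cons_append, List.append_assoc] at hnorm
    exact .head ⟨[], w₂ ++ q, w₁, y, hw₁, hred₁, by simp, by simp⟩ hnorm

theorem false_of_redex_inside_ftReduced {t e w₂ q₁ q₂ : List X} {y₁ y₂ : X}
    (hw₁ : ∀ a ∈ t ++ y₂ :: e, a < y₁) (hred₁ : FTReduced (t ++ y₂ :: e))
    (hw₂ : ∀ a ∈ w₂, a < y₂) (h : w₂ ++ y₂ :: q₂ = e ++ y₁ :: q₁) : False := by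
  have hy : y₂ < y₁ := hw₁ y₂ (by simp)
  rcases List.append_cons_eq_append_cons h with ⟨-, rfl, -⟩ | ⟨e', rfl, -⟩ | ⟨e', rfl, -⟩
  · exact lt_irrefl _ hy
  · exact hred₁ ⟨t, w₂, e', y₂, hw₂, by simp⟩
  · exact lt_asymm hy (hw₂ y₁ (by simp))

theorem join_ftStep_of_leading_redex {t w₁ w₂ q₁ q₂ : List X} {y₁ y₂ : X}
    (hw₁ : ∀ a ∈ w₁, a < y₁) (hred₁ : FTReduced w₁)
    (hw₂ : ∀ a ∈ w₂, a < y₂) (hred₂ : FTReduced w₂)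
    (h : y₁ :: (w₁ ++ y₁ :: q₁) = t ++ y₂ :: (w₂ ++ y₂ :: q₂)) :
    Join (ReflTransGen FTStep) (y₁ :: (w₁ ++ q₁)) (t ++ y₂ :: (w₂ ++ q₂)) := by
  rcases List.append_cons_eq_append_cons (a := []) h with
    ⟨rfl, rfl, h₁⟩ | ⟨e, rfl, h₁⟩ | ⟨e, he, -⟩
  · rcases List.append_cons_eq_append_cons h₁ with ⟨rfl, -, rfl⟩ | ⟨e, rfl, -⟩ | ⟨e, rfl, -⟩
    · exact ⟨_, .refl, .refl⟩
    · exact absurd (hw₂ y₁ (by simp)) (lt_irrefl _)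
    · exact absurd (hw₁ y₁ (by simp)) (lt_irrefl _)
  · rcases List.append_cons_eq_append_cons h₁ with
      ⟨rfl, rfl, rfl⟩ | ⟨e', rfl, rfl⟩ | ⟨e', rfl, h'⟩
    · simpa using join_ftStep_of_overlap w₁ w₂ q₂ y₁ hw₁ hw₂ hred₁
    · refine ⟨y₁ :: (w₁ ++ e' ++ y₂ :: (w₂ ++ q₂)), .single ?_, .single ?_⟩
      · exact ⟨y₁ :: (w₁ ++ e'), q₂, w₂, y₂, hw₂, hred₂, by simp, by simp⟩
      · exact ⟨[], e' ++ y₂ :: (w₂ ++ q₂), w₁, y₁, hw₁, hred₁, by simp, by simp⟩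
    · exact (false_of_redex_inside_ftReduced hw₁ hred₁ hw₂ h').elim
  · simp at he

theorem join_ftStep {u v w : List X} (hv : FTStep u v) (hw : FTStep u w) :
    Join (ReflTransGen FTStep) v w := by
  obtain ⟨p₁, q₁, w₁, y₁, hw₁, hred₁, rfl, rfl⟩ := hv
  obtain ⟨p₂, q₂, w₂, y₂, hw₂, hred₂, hu, rfl⟩ := hw
  have join_append_left : ∀ p {a b : List X}, Join (ReflTransGen FTStep) a b →
      Join (ReflTransGen FTStep) (p ++ a) (p ++ b) := fun p _ _ ⟨z, ha, hb⟩ =>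
    ⟨p ++ z, by simpa using ha.ftStep_append_append p [],
      by simpa using hb.ftStep_append_append p []⟩
  simp only [List.append_assoc, List.cons_append, List.nil_append] at hu ⊢
  rcases List.append_eq_append_iff.1 hu with ⟨t, rfl, h⟩ | ⟨t, rfl, h⟩
  · simpa using join_append_left p₁ (join_ftStep_of_leading_redex hw₁ hred₁ hw₂ hred₂ h)
  · simpa using symm (join_append_left p₂ (join_ftStep_of_leading_redex hw₂ hred₂ hw₁ hred₁ h))

theorem eqvGen_ftBaseStep_of_redex (p w q : List X) (y : X) (hw : ∀ a ∈ w, a < y) :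
    EqvGen FTBaseStep (p ++ [y] ++ w ++ [y] ++ q) (p ++ [y] ++ w ++ q) := by
  induction w generalizing p with
  | nil => exact .rel _ _ (.inl ⟨p, q, y, by simp, by simp⟩)
  | cons x w ih =>
    have hx : x < y := hw x (by simp)
    have hyxy : EqvGen FTBaseStep (p ++ [y, x, y] ++ w ++ [y] ++ q)
        (p ++ [y, x, y] ++ w ++ q) := by
      simpa using ih (p ++ [y, x]) fun a ha => hw a (by simp [ha])
    refine .trans _ _ _ (.symm _ _ (.rel _ _ (.inr ⟨p, w ++ [y] ++ q, x, y, hx, ?_, ?_⟩)))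
      (.trans _ _ _ hyxy (.rel _ _ (.inr ⟨p, w ++ q, x, y, hx, ?_, ?_⟩))) <;> simp

theorem FTBaseStep.ftStep {u v : List X} (h : FTBaseStep u v) : FTStep u v := by
  rcases h with ⟨p, q, x, rfl, rfl⟩ | ⟨p, q, x, y, hxy, rfl, rfl⟩
  · exact ⟨p, q, [], x, by simp, ftReduced_nil, by simp, by simp⟩
  · exact ⟨p, q, [x], y, by simpa using hxy, ftReduced_singleton x, by simp, by simp⟩

theorem eqvGen_ftStep_iff {u v : List X} : EqvGen FTStep u v ↔ EqvGen FTBaseStep u v := by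
  refine ⟨fun h => EqvGen.eqvGen_le ?_ u v h,
    fun h => EqvGen.mono (fun _ _ => FTBaseStep.ftStep) u v h⟩
  rintro _ _ ⟨p, q, w, y, hw, -, rfl, rfl⟩
  exact eqvGen_ftBaseStep_of_redex p w q y hw

end FreeTreeMonoid

theorem freeTreeMonoid_rewriting_confluent_general {X : Type*} [LinearOrder X] :
    (∀ u v : List X, FTStep u v → v.length < u.length) ∧
    (∀ u v w : List X, Relation.ReflTransGen FTStep u v → Relation.ReflTransGen FTStep u w →
      ∃ z : List X, Relation.ReflTransGen FTStep v z ∧ Relation.ReflTransGen FTStep w z) ∧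
    (∀ u v : List X, Relation.EqvGen FTStep u v ↔ Relation.EqvGen FTBaseStep u v) :=
  ⟨fun _ _ h => h.length_lt,
    fun _ _ _ => newman wellFounded_flip_ftStep fun _ _ _ => join_ftStep,
    fun _ _ => eqvGen_ftStep_iff⟩

/-- In the free tree monoid `FT(X)` on a totally ordered finite alphabet `X`, the rewriting
system consisting of the rules `y·u·y → y·u` (for `y ∈ X` and `u` a reduced word over letters
strictly smaller than `y`) is length-reducing and confluent, and it presents `FT(X)`: it
generates the same congruence on words as the defining relations `x² = x` and
`y·x·y = y·x` (`x < y`). -/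
theorem freeTreeMonoid_rewriting_confluent {X : Type*} [LinearOrder X] [Fintype X] :
    (∀ u v : List X, FTStep u v → v.length < u.length) ∧
    (∀ u v w : List X, Relation.ReflTransGen FTStep u v → Relation.ReflTransGen FTStep u w →
      ∃ z : List X, Relation.ReflTransGen FTStep v z ∧ Relation.ReflTransGen FTStep w z) ∧
    (∀ u v : List X, Relation.EqvGen FTStep u v ↔ Relation.EqvGen FTBaseStep u v) :=
  freeTreeMonoid_rewriting_confluent_general
end

section
/- The free tree monoid FT(X) on a totally ordered finite alphabet X is R-trivial. -/
/-- The defining relations of the free tree monoid `FT(X)`: `x·x = x` for every `x`, and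
`y·x·y = y·x` whenever `x < y`. -/
def ftRel (X : Type*) [LinearOrder X] : FreeMonoid X → FreeMonoid X → Prop := fun a b =>
  (∃ x : X, a = FreeMonoid.of x * FreeMonoid.of x ∧ b = FreeMonoid.of x) ∨
  (∃ x y : X, x < y ∧ a = FreeMonoid.of y * FreeMonoid.of x * FreeMonoid.of y ∧
    b = FreeMonoid.of y * FreeMonoid.of x)

/-- The free tree monoid `FT(X)` on a totally ordered alphabet `X`. -/
def FreeTreeMonoid (X : Type*) [LinearOrder X] :=
  (conGen (ftRel X)).Quotient

noncomputable instance (X : Type*) [LinearOrder X] : Monoid (FreeTreeMonoid X) :=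
  Con.monoid (conGen (ftRel X))

/-!
Reduce words from left to right: a letter `x` is appended to the reduced word `r` read so far
unless `r` already *absorbs* it, i.e. `r = r₁ x r₂` with every letter of `r₂` below `x`; in that
case `r x = r₁ x r₂ x = r₁ x r₂` in `FT(X)`. This reduction is a right action of `FT(X)` on
words, so the reduced form of `m t` extends that of `m`, and the reduced form of `m` represents
`m`. Hence `m' = m t` and `m = m' s` force the reduced forms of `m` and `m'` to be prefixes of
each other, thus equal.
-/

namespace FreeTreeMonoid

variable {X : Type*} [LinearOrder X]

def Absorbs (r : List X) (x : X) : Prop :=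
  ∃ r₁ r₂, r = r₁ ++ x :: r₂ ∧ ∀ z ∈ r₂, z < x

open scoped Classical in
noncomputable def reduceSnoc (r : List X) (x : X) : List X :=
  if Absorbs r x then r else r ++ [x]

noncomputable def reduceAppend (r w : List X) : List X :=
  w.foldl reduceSnoc r

lemma reduceSnoc_of_absorbs {r : List X} {x : X} (h : Absorbs r x) : reduceSnoc r x = r :=
  if_pos h

lemma reduceSnoc_of_not_absorbs {r : List X} {x : X} (h : ¬Absorbs r x) :
    reduceSnoc r x = r ++ [x] :=
  if_neg h

lemma absorbs_append_singleton (r : List X) (x : X) : Absorbs (r ++ [x]) x :=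
  ⟨r, [], rfl, by simp⟩

lemma Absorbs.append_singleton_of_lt {r : List X} {x z : X} (h : Absorbs r x) (hz : z < x) :
    Absorbs (r ++ [z]) x := by
  obtain ⟨r₁, r₂, rfl, hr₂⟩ := h
  refine ⟨r₁, r₂ ++ [z], by simp, ?_⟩
  simpa [or_imp, forall_and] using ⟨hr₂, hz⟩

lemma absorbs_reduceSnoc_self (r : List X) (x : X) : Absorbs (reduceSnoc r x) x := by
  by_cases h : Absorbs r x
  · rwa [reduceSnoc_of_absorbs h]
  · rw [reduceSnoc_of_not_absorbs h]
    exact absorbs_append_singleton r x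

lemma Absorbs.reduceSnoc_of_lt {r : List X} {x z : X} (h : Absorbs r x) (hz : z < x) :
    Absorbs (reduceSnoc r z) x := by
  by_cases hr : Absorbs r z
  · rwa [reduceSnoc_of_absorbs hr]
  · rw [reduceSnoc_of_not_absorbs hr]
    exact h.append_singleton_of_lt hz

lemma reduceSnoc_reduceSnoc_self (r : List X) (x : X) :
    reduceSnoc (reduceSnoc r x) x = reduceSnoc r x :=
  reduceSnoc_of_absorbs (absorbs_reduceSnoc_self r x)

lemma reduceSnoc_reduceSnoc_reduceSnoc_of_lt (r : List X) {x y : X} (h : x < y) :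
    reduceSnoc (reduceSnoc (reduceSnoc r y) x) y = reduceSnoc (reduceSnoc r y) x :=
  reduceSnoc_of_absorbs ((absorbs_reduceSnoc_self r y).reduceSnoc_of_lt h)

lemma prefix_reduceSnoc (r : List X) (x : X) : r <+: reduceSnoc r x := by
  by_cases h : Absorbs r x
  · rw [reduceSnoc_of_absorbs h]
  · rw [reduceSnoc_of_not_absorbs h]
    exact List.prefix_append r [x]

lemma prefix_reduceAppend (r w : List X) : r <+: reduceAppend r w := by
  induction w generalizing r with
  | nil => exact List.prefix_refl r
  | cons x w ih => exact (prefix_reduceSnoc r x).trans (ih _)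

lemma reduceAppend_append (r u v : List X) :
    reduceAppend r (u ++ v) = reduceAppend (reduceAppend r u) v :=
  List.foldl_append ..

def reduceCon : Con (FreeMonoid X) where
  r a b := ∀ r, reduceAppend r a.toList = reduceAppend r b.toList
  iseqv := ⟨fun _ _ => rfl, fun h r => (h r).symm, fun h₁ h₂ r => (h₁ r).trans (h₂ r)⟩
  mul' {a b c d} hab hcd r := by
    simp only [FreeMonoid.toList_mul, reduceAppend_append, hab r, hcd]

lemma conGen_le_reduceCon : conGen (ftRel X) ≤ reduceCon := by
  refine Con.conGen_le.mpr fun a b hab r => ?_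
  rcases hab with ⟨x, rfl, rfl⟩ | ⟨x, y, hxy, rfl, rfl⟩
  · exact reduceSnoc_reduceSnoc_self r x
  · exact reduceSnoc_reduceSnoc_reduceSnoc_of_lt r hxy

noncomputable def mk : FreeMonoid X →* FreeTreeMonoid X :=
  (conGen (ftRel X)).mk'

lemma mk_of_mul_self (x : X) : mk (.of x) * mk (.of x) = mk (.of x) := by
  rw [← map_mul]
  exact (conGen (ftRel X)).eq.mpr (ConGen.Rel.of _ _ (Or.inl ⟨x, rfl, rfl⟩))

lemma mk_of_mul_of_mul_of {x y : X} (h : x < y) :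
    mk (.of y) * mk (.of x) * mk (.of y) = mk (.of y) * mk (.of x) := by
  simp only [← map_mul]
  exact (conGen (ftRel X)).eq.mpr (ConGen.Rel.of _ _ (Or.inr ⟨x, y, h, rfl, rfl⟩))

lemma mk_of_mul_mul_of_of_forall_lt {x : X} {w : List X} (hw : ∀ z ∈ w, z < x) :
    mk (.of x) * mk (.ofList w) * mk (.of x) = mk (.of x) * mk (.ofList w) := by
  induction w with
  | nil => simpa using mk_of_mul_self x
  | cons z w ih =>
    simp only [List.forall_mem_cons] at hw
    have hxz := mk_of_mul_of_mul_of hw.1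
    set a := mk (.of x)
    set b := mk (.of z)
    set p := mk (.ofList w)
    rw [FreeMonoid.ofList_cons, map_mul]
    calc a * (b * p) * a = a * b * a * p * a := by rw [hxz, ← mul_assoc a b p]
      _ = a * b * (a * p * a) := by simp only [mul_assoc]
      _ = a * b * a * p := by rw [ih hw.2]; simp only [mul_assoc]
      _ = a * (b * p) := by rw [hxz, mul_assoc]

lemma mk_ofList_append_singleton_of_absorbs {r : List X} {x : X} (h : Absorbs r x) :
    mk (.ofList (r ++ [x])) = mk (.ofList r) := by
  obtain ⟨r₁, r₂, rfl, hr₂⟩ := h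
  have := mk_of_mul_mul_of_of_forall_lt hr₂
  simp only [FreeMonoid.ofList_append, FreeMonoid.ofList_cons,
    FreeMonoid.ofList_nil, map_mul, mul_one, mul_assoc] at this ⊢
  rw [this]

lemma mk_ofList_reduceAppend (r w : List X) :
    mk (.ofList (reduceAppend r w)) = mk (.ofList (r ++ w)) := by
  induction w generalizing r with
  | nil => simp [reduceAppend]
  | cons x w ih =>
    have hstep : mk (.ofList (reduceSnoc r x)) = mk (.ofList (r ++ [x])) := by
      by_cases h : Absorbs r x
      · rw [reduceSnoc_of_absorbs h, mk_ofList_append_singleton_of_absorbs h]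
      · rw [reduceSnoc_of_not_absorbs h]
    rw [List.append_cons, FreeMonoid.ofList_append, map_mul, ← hstep, ← map_mul,
      ← FreeMonoid.ofList_append, ← ih]
    rfl

lemma mk_surjective : Function.Surjective (mk (X := X)) :=
  Con.mk'_surjective

noncomputable def normalForm (m : FreeTreeMonoid X) : List X :=
  Con.liftOn m (fun a => reduceAppend [] a.toList) fun _ _ h => conGen_le_reduceCon h []

lemma normalForm_mk (a : FreeMonoid X) : normalForm (mk a) = reduceAppend [] a.toList :=
  rfl

lemma mk_ofList_normalForm (m : FreeTreeMonoid X) : mk (.ofList (normalForm m)) = m := by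
  obtain ⟨a, rfl⟩ := mk_surjective m
  rw [normalForm_mk, mk_ofList_reduceAppend]
  rfl

lemma normalForm_injective : Function.Injective (normalForm (X := X)) :=
  Function.LeftInverse.injective mk_ofList_normalForm

lemma normalForm_prefix_normalForm_mul (m t : FreeTreeMonoid X) :
    normalForm m <+: normalForm (m * t) := by
  obtain ⟨a, rfl⟩ := mk_surjective m
  obtain ⟨b, rfl⟩ := mk_surjective t
  rw [← map_mul, normalForm_mk, normalForm_mk, FreeMonoid.toList_mul, reduceAppend_append]
  exact prefix_reduceAppend _ _

end FreeTreeMonoid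

theorem freeTreeMonoid_rTrivial_general {X : Type*} [LinearOrder X] :
    ∀ m m' : FreeTreeMonoid X,
      {z : FreeTreeMonoid X | ∃ t, m * t = z} = {z : FreeTreeMonoid X | ∃ t, m' * t = z} →
      m = m' := by
  intro m m' h
  obtain ⟨t, rfl⟩ : m' ∈ {z | ∃ t, m * t = z} := h ▸ ⟨1, mul_one m'⟩
  obtain ⟨s, hs⟩ : m ∈ {z | ∃ s, m * t * s = z} := h.symm ▸ ⟨1, mul_one m⟩
  have h₁ := FreeTreeMonoid.normalForm_prefix_normalForm_mul m t
  have h₂ := hs ▸ FreeTreeMonoid.normalForm_prefix_normalForm_mul (m * t) s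
  exact FreeTreeMonoid.normalForm_injective (h₁.eq_of_length (h₁.length_le.antisymm h₂.length_le))

/-- The free tree monoid on a totally ordered finite alphabet is R-trivial:
equality of principal right ideals implies equality of elements. -/
theorem freeTreeMonoid_rTrivial {X : Type*} [LinearOrder X] [Fintype X] :
    ∀ m m' : FreeTreeMonoid X,
      {z : FreeTreeMonoid X | ∃ t, m * t = z} = {z : FreeTreeMonoid X | ∃ t, m' * t = z} →
      m = m' :=
  freeTreeMonoid_rTrivial_general
end

section
/- Let M be a generalized tree monoid: M is generated by a totally ordered set X such that each x ∈ X satisfies x^{k+1} = x^k for some k, and whenever x < y in X, either x and y commute or y is idempotent and y·x·y = y·x. Then M is R-trivial. -/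
/-!
R-triviality amounts to: `m * (a * b) = m` implies `m * a = m`. Write `a * b` as a word `w` in
the generators. The key fact is that some power `e` of (the value of) `w` satisfies `e * x s = e`
for every letter `s` of `w`; then `m = m * e` absorbs every letter of `a`, hence `a` itself.

The key fact is proved by induction on the set of letters, removing the largest letter `j`.
If `x j` commutes with every letter, then `w = v * x j ^ c` with `v` free of `j`, and large powers
of `x j` are stationary. Otherwise `x j` is idempotent and `x j * a * x j = x j * a` for every
letter `a`. Then `x j` swallows every later occurrence of itself, so `w = A * x j * B` with
`A`, `B` free of `j`, and `(A * x j * B) ^ (t + 1) = A * x j * (B * A) ^ t * B`: the induction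
hypothesis for the word `B * A` finishes the proof.
-/

namespace GeneralizedTreeMonoid

variable {M : Type*} [Monoid M]

def rightStab (m : M) : Submonoid M where
  carrier := {a | m * a = m}
  one_mem' := mul_one m
  mul_mem' {a b} (ha : m * a = m) (hb : m * b = m) := by
    show m * (a * b) = m
    rw [← mul_assoc, ha, hb]

@[simp] lemma mem_rightStab {m a : M} : a ∈ rightStab m ↔ m * a = m := Iff.rfl

lemma rightStab_le_of_mem {m a : M} (ha : a ∈ rightStab m) : rightStab a ≤ rightStab m :=
  fun b hb ↦ by rw [mem_rightStab] at *; rw [← ha, mul_assoc, hb]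

lemma pow_mul_self_of_pow_succ {y : M} {k n : ℕ} (hk : y ^ (k + 1) = y ^ k) (hn : k ≤ n) :
    y ^ n * y = y ^ n := by
  have hy : y ∈ rightStab (y ^ k) := by rwa [mem_rightStab, ← pow_succ]
  have hyn : y ^ n = y ^ k := by
    rw [← Nat.add_sub_cancel' hn, pow_add]; exact pow_mem hy _
  rw [hyn, hy]

def idemAbsorbing (z : M) (hz : IsIdempotentElem z) : Submonoid M where
  carrier := {a | z * a * z = z * a}
  one_mem' := by simpa using hz.eq
  mul_mem' {a b} (ha : z * a * z = z * a) (hb : z * b * z = z * b) := by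
    show z * (a * b) * z = z * (a * b)
    rw [← mul_assoc, ← ha, mul_assoc (z * a) z b, mul_assoc (z * a) (z * b), hb]

@[simp] lemma mem_idemAbsorbing {z a : M} {hz : IsIdempotentElem z} :
    a ∈ idemAbsorbing z hz ↔ z * a * z = z * a := Iff.rfl

lemma mul_mul_congr_of_mem_idemAbsorbing {z a r r' : M} {hz : IsIdempotentElem z}
    (ha : a ∈ idemAbsorbing z hz) (h : z * r = z * r') : z * a * r = z * a * r' := by
  rw [mem_idemAbsorbing] at ha
  rw [← ha, mul_assoc _ z r, h, ← mul_assoc, ha]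

lemma mul_mul_pow_succ {z a b : M} {hz : IsIdempotentElem z} (hba : b * a ∈ idemAbsorbing z hz)
    (t : ℕ) : (a * z * b) ^ (t + 1) = a * z * (b * a) ^ t * b := by
  induction t with
  | zero => simp
  | succ t ih =>
    have h := (mem_idemAbsorbing.mp (pow_mem hba (t + 1)))
    rw [pow_succ, ih, pow_succ]
    calc a * z * (b * a) ^ t * b * (a * z * b)
        = a * (z * ((b * a) ^ t * (b * a)) * z) * b := by simp only [mul_assoc]
      _ = a * z * ((b * a) ^ t * (b * a)) * b := by rw [← pow_succ, h]; simp only [mul_assoc]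

lemma mem_idemAbsorbing_of_commute {z a : M} {hz : IsIdempotentElem z} (h : Commute a z) :
    a ∈ idemAbsorbing z hz := by
  rw [mem_idemAbsorbing, mul_assoc, h.eq, ← mul_assoc, hz.eq]

section Words

variable {ι : Type*} (x : ι → M)

lemma prod_map_mem {S : Submonoid M} {u : List ι} (h : ∀ s ∈ u, x s ∈ S) : (u.map x).prod ∈ S :=
  S.list_prod_mem (List.forall_mem_map.2 h)

lemma exists_prod_map_eq (hgen : Submonoid.closure (Set.range x) = ⊤) (m : M) :
    ∃ w : List ι, (w.map x).prod = m := by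
  have hm : m ∈ MonoidHom.mrange (FreeMonoid.lift x) := by rw [FreeMonoid.mrange_lift, hgen]; trivial
  obtain ⟨w, rfl⟩ := hm
  exact ⟨w.toList, (FreeMonoid.lift_apply x w).symm⟩

def HasStablePower (w : List ι) : Prop :=
  ∃ N, ∀ s ∈ w, x s ∈ rightStab ((w.map x).prod ^ N)

variable [DecidableEq ι]

lemma prod_map_eq_prod_map_filter_mul_pow (j : ι) (w : List ι)
    (h : ∀ s ∈ w, Commute (x s) (x j)) :
    (w.map x).prod = ((w.filter (· ≠ j)).map x).prod * x j ^ w.count j := by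
  induction w with
  | nil => simp
  | cons s w ih =>
    rw [List.forall_mem_cons] at h
    have hcomm : Commute (x j) ((w.filter (· ≠ j)).map x).prod :=
      Commute.list_prod_right _ _ fun y hy ↦ by
        obtain ⟨a, ha, rfl⟩ := List.mem_map.mp hy
        exact (h.2 a (List.mem_filter.mp ha).1).symm
    by_cases hs : s = j
    · subst hs
      rw [List.map_cons, List.prod_cons, ih h.2, ← mul_assoc, hcomm.eq, mul_assoc, ← pow_succ']
      simp
    · simp [hs, ih h.2, mul_assoc]

lemma mul_prod_map_eq_mul_prod_map_filter {j : ι} (hz : IsIdempotentElem (x j)) (q : List ι)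
    (h : ∀ s ∈ q, x s ∈ idemAbsorbing (x j) hz) :
    x j * (q.map x).prod = x j * ((q.filter (· ≠ j)).map x).prod := by
  induction q with
  | nil => rfl
  | cons s q ih =>
    rw [List.forall_mem_cons] at h
    by_cases hs : s = j
    · subst hs
      simp [← mul_assoc, hz.eq, ih h.2]
    · simpa [hs, ← mul_assoc] using mul_mul_congr_of_mem_idemAbsorbing h.1 (ih h.2)

lemma hasStablePower_of_commute {j : ι} {k : ℕ} (hk : x j ^ (k + 1) = x j ^ k) {w : List ι}
    (hj : j ∈ w) (hcomm : ∀ s ∈ w, Commute (x s) (x j))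
    (ih : HasStablePower x (w.filter (· ≠ j))) : HasStablePower x w := by
  obtain ⟨N₀, hN₀⟩ := ih
  set v := ((w.filter (· ≠ j)).map x).prod
  have hv : v ∈ rightStab (v ^ N₀) := prod_map_mem x hN₀
  have hc : 1 ≤ w.count j := List.count_pos_iff.mpr hj
  have hvj : Commute v (x j ^ w.count j) :=
    (Commute.list_prod_left _ _ fun y hy ↦ by
      obtain ⟨a, ha, rfl⟩ := List.mem_map.mp hy
      exact hcomm a (List.mem_filter.mp ha).1).pow_right _
  have hpow : (w.map x).prod ^ (N₀ + k) = v ^ N₀ * x j ^ (w.count j * (N₀ + k)) := by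
    rw [prod_map_eq_prod_map_filter_mul_pow x j w hcomm, hvj.mul_pow, ← pow_mul, pow_add,
      mem_rightStab.mp (pow_mem hv k)]
  refine ⟨N₀ + k, fun s hs ↦ ?_⟩
  rw [hpow, mem_rightStab, mul_assoc]
  by_cases hsj : s = j
  · subst hsj
    rw [pow_mul_self_of_pow_succ hk (by nlinarith)]
  · have hsv : v ^ N₀ * x s = v ^ N₀ := hN₀ s (List.mem_filter.mpr ⟨hs, by simpa using hsj⟩)
    rw [← ((hcomm s hs).pow_right _).eq, ← mul_assoc, hsv]

lemma hasStablePower_of_mem_idemAbsorbing {j : ι} (hz : IsIdempotentElem (x j)) {w : List ι}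
    (hj : j ∈ w) (habs : ∀ s ∈ w, x s ∈ idemAbsorbing (x j) hz)
    (ih : ∀ u : List ι, (∀ s ∈ u, s ∈ w ∧ s ≠ j) → HasStablePower x u) :
    HasStablePower x w := by
  obtain ⟨p, q, rfl, hjp⟩ := List.eq_append_cons_of_mem hj
  set A := (p.map x).prod
  set B := ((q.filter (· ≠ j)).map x).prod
  have hw : ((p ++ j :: q).map x).prod = A * x j * B := by
    have := mul_prod_map_eq_mul_prod_map_filter x hz q fun s hs ↦ habs s (by simp [hs])
    simp [A, B, this, mul_assoc]
  obtain ⟨N₀, hN₀⟩ := ih (q.filter (· ≠ j) ++ p) fun s hs ↦ by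
    simp only [List.mem_append, List.mem_filter] at hs
    rcases hs with ⟨hs, hsj⟩ | hs
    · exact ⟨by simp [hs], by simpa using hsj⟩
    · exact ⟨by simp [hs], fun h ↦ hjp (h ▸ hs)⟩
  rw [List.map_append, List.prod_append] at hN₀
  change ∀ s ∈ q.filter (· ≠ j) ++ p, x s ∈ rightStab ((B * A) ^ N₀) at hN₀
  have hD : B * A ∈ idemAbsorbing (x j) hz :=
    mul_mem (prod_map_mem x fun s hs ↦ habs s (by simp_all))
      (prod_map_mem x fun s hs ↦ habs s (by simp [hs]))
  have hB : B ∈ rightStab ((B * A) ^ N₀) :=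
    prod_map_mem x fun s hs ↦ hN₀ s (List.mem_append_left p hs)
  refine ⟨N₀ + 1, fun s hs ↦ ?_⟩
  rw [hw, mul_mul_pow_succ hD, mul_assoc _ _ B, mem_rightStab.mp hB, mem_rightStab]
  by_cases hsj : s = j
  · subst hsj
    rw [mul_assoc A, mul_assoc A, mem_idemAbsorbing.mp (pow_mem hD N₀)]
  · have hs' : s ∈ q.filter (· ≠ j) ++ p := by simp [hsj] at hs ⊢; tauto
    rw [mul_assoc, mem_rightStab.mp (hN₀ s hs')]

end Words

variable {ι : Type*} [LinearOrder ι] (x : ι → M)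

theorem hasStablePower (hpow : ∀ i, ∃ k : ℕ, x i ^ (k + 1) = x i ^ k)
    (hrel : ∀ i j : ι, i < j →
      (x i * x j = x j * x i) ∨ (x j * x j = x j ∧ x j * x i * x j = x j * x i))
    (w : List ι) : HasStablePower x w := by
  suffices ∀ S : Finset ι, ∀ w : List ι, (∀ s ∈ w, s ∈ S) → HasStablePower x w from
    this w.toFinset w fun s ↦ List.mem_toFinset.mpr
  intro S
  induction S using Finset.induction_on_max with
  | empty => exact fun w hw ↦ ⟨0, fun s hs ↦ absurd (hw s hs) (Finset.notMem_empty s)⟩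
  | insert j S hS ih =>
    intro w hw
    have ih' (u : List ι) (hu : ∀ s ∈ u, s ∈ w ∧ s ≠ j) : HasStablePower x u :=
      ih u fun s hs ↦ (Finset.mem_insert.mp (hw s (hu s hs).1)).resolve_left (hu s hs).2
    have hlt (s : ι) (hs : s ∈ w) (hsj : s ≠ j) : s < j :=
      hS s ((Finset.mem_insert.mp (hw s hs)).resolve_left hsj)
    by_cases hj : j ∈ w
    swap
    · exact ih' w fun s hs ↦ ⟨hs, ne_of_mem_of_not_mem hs hj⟩
    by_cases hcomm : ∀ s ∈ w, Commute (x s) (x j)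
    · obtain ⟨k, hk⟩ := hpow j
      exact hasStablePower_of_commute x hk hj hcomm <| ih' _ fun s hs ↦ by simp_all
    · push Not at hcomm
      obtain ⟨s₀, hs₀, hne⟩ := hcomm
      have hs₀j : s₀ < j := hlt s₀ hs₀ fun h ↦ hne (h ▸ Commute.refl _)
      have hz : IsIdempotentElem (x j) := ((hrel s₀ j hs₀j).resolve_left hne).1
      refine hasStablePower_of_mem_idemAbsorbing x hz hj (fun s hs ↦ ?_) ih'
      rcases eq_or_ne s j with rfl | hsj
      · exact mem_idemAbsorbing_of_commute (Commute.refl _)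
      rcases hrel s j (hlt s hs hsj) with hc | ⟨-, habs⟩
      · exact mem_idemAbsorbing_of_commute hc
      · exact habs

lemma mul_eq_self_of_mul_mul_eq_self (hgen : Submonoid.closure (Set.range x) = ⊤)
    (hpow : ∀ i, ∃ k : ℕ, x i ^ (k + 1) = x i ^ k)
    (hrel : ∀ i j : ι, i < j →
      (x i * x j = x j * x i) ∨ (x j * x j = x j ∧ x j * x i * x j = x j * x i))
    {m a b : M} (h : m * (a * b) = m) : m * a = m := by
  obtain ⟨u, rfl⟩ := exists_prod_map_eq x hgen a
  obtain ⟨v, rfl⟩ := exists_prod_map_eq x hgen b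
  obtain ⟨N, hN⟩ := hasStablePower x hpow hrel (u ++ v)
  have hm : ((u ++ v).map x).prod ^ N ∈ rightStab m := pow_mem (by simpa using h) N
  exact rightStab_le_of_mem hm (prod_map_mem x fun s hs ↦ hN s (List.mem_append_left v hs))

end GeneralizedTreeMonoid

theorem generalizedTreeMonoid_rTrivial_general {M ι : Type*} [Monoid M] [LinearOrder ι]
    (x : ι → M) (hgen : Submonoid.closure (Set.range x) = ⊤)
    (hpow : ∀ i, ∃ k : ℕ, x i ^ (k + 1) = x i ^ k)
    (hrel : ∀ i j : ι, i < j →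
      (x i * x j = x j * x i) ∨ (x j * x j = x j ∧ x j * x i * x j = x j * x i)) :
    ∀ m m' : M, {z : M | ∃ t : M, m * t = z} = {z : M | ∃ t : M, m' * t = z} → m = m' := by
  intro m m' h
  obtain ⟨a, ha⟩ : m' ∈ {z : M | ∃ t : M, m * t = z} := h ▸ ⟨1, mul_one m'⟩
  obtain ⟨b, hb⟩ : m ∈ {z : M | ∃ t : M, m' * t = z} := h ▸ ⟨1, mul_one m⟩
  have hab : m * (a * b) = m := by rw [← mul_assoc, ha, hb]
  rw [← ha, GeneralizedTreeMonoid.mul_eq_self_of_mul_mul_eq_self x hgen hpow hrel hab]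

/-- A generalized tree monoid is R-trivial. Here `M` is generated by the family
`x : ι → M` indexed by a finite totally ordered set, each generator satisfies
`xᵢ^(k+1) = xᵢ^k` for some `k`, and whenever `i < j` either `xᵢ` and `xⱼ` commute, or `xⱼ` is
idempotent and `xⱼ·xᵢ·xⱼ = xⱼ·xᵢ`. The conclusion is R-triviality: equal principal right
ideals imply equal elements. -/
theorem generalizedTreeMonoid_rTrivial {M ι : Type*} [Monoid M] [LinearOrder ι] [Fintype ι]
    (x : ι → M) (hgen : Submonoid.closure (Set.range x) = ⊤)
    (hpow : ∀ i, ∃ k : ℕ, x i ^ (k + 1) = x i ^ k)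
    (hrel : ∀ i j : ι, i < j →
      (x i * x j = x j * x i) ∨ (x j * x j = x j ∧ x j * x i * x j = x j * x i)) :
    ∀ m m' : M, {z : M | ∃ t : M, m * t = z} = {z : M | ∃ t : M, m' * t = z} → m = m' :=
  generalizedTreeMonoid_rTrivial_general x hgen hpow hrel
end

section
/- For the coupon collector problem with k coupon types drawn with probabilities p₁,...,p_k (positive, summing to 1), the expected number of draws τ to collect all k types satisfies E[τ] = Σ_{I ⊊ {1,...,k}} (−1)^{k−|I|−1} / (1 − Σ_{i∈I} p_i). In the uniform case p_i = 1/k this equals k·(1 + 1/2 + ... + 1/k). -/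
/-!
`τ > n` says that the draws `f : Fin n → Fin k` do not form a surjection. Inclusion–exclusion over
the events "coupon `a` never appears" gives
`Pr(τ > n) = ∑_{S ⊊ [k]} (-1)^(k - |S| - 1) (∑_{i ∈ S} pᵢ)^n`, a finite combination of geometric
sequences with ratios in `[0, 1)`, and summing over `n` gives the formula for `E[τ]`. In the uniform
case the terms depend only on `|S|`, and the alternating binomial sum
`∑_{j < k} (-1)^j C(k, j+1) / (j+1)` equals `H_k` by Pascal's rule and induction on `k`.
-/

open Finset

/-- The probability that after `nd` independent draws (draw `j` yielding coupon `f j` with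
probability `∏ j, p (f j)`) not all `k` coupon types have been collected, i.e. `Pr(τ > nd)`. -/
noncomputable def couponTailProb (k : ℕ) (p : Fin k → ℝ) (nd : ℕ) : ℝ :=
  ∑ f : Fin nd → Fin k, if Function.Surjective f then 0 else ∏ j : Fin nd, p (f j)

/-- The expected number of draws `E[τ]` to collect all `k` coupon types, expressed via the
standard identity `E[τ] = ∑_{n ≥ 0} Pr(τ > n)`. -/
noncomputable def couponCollectorExpectation (k : ℕ) (p : Fin k → ℝ) : ℝ :=
  ∑' nd : ℕ, couponTailProb k p nd

open Function

theorem Finset.mem_finset_inf {ι α : Type*} [Fintype α] [DecidableEq α] {s : Finset ι}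
    {S : ι → Finset α} {a : α} : a ∈ s.inf S ↔ ∀ i ∈ s, a ∈ S i := by
  rw [← singleton_subset_iff, Finset.le_inf_iff]
  simp only [singleton_subset_iff]

theorem neg_neg_one_pow_card_compl {α R : Type*} [Fintype α] [DecidableEq α] [CommRing R]
    {S : Finset α} (hS : S ≠ univ) :
    -(-1 : R) ^ #Sᶜ = (-1) ^ (Fintype.card α - #S - 1) := by
  obtain ⟨m, hm⟩ := Nat.exists_eq_add_of_lt ((card_lt_iff_ne_univ S).2 hS)
  rw [card_compl, hm, show #S + m + 1 - #S - 1 = m by omega,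
    show #S + m + 1 - #S = m + 1 by omega, pow_succ]
  ring

section Surjections

variable {ι α R : Type*} [Fintype ι] [DecidableEq ι] [Fintype α] [DecidableEq α] [CommRing R]

theorem sum_prod_surjective (p : α → R) :
    ∑ f : ι → α with Surjective f, ∏ j, p (f j) =
      ∑ S : Finset α, (-1) ^ #Sᶜ * (∑ a ∈ S, p a) ^ Fintype.card ι := by
  have h := inclusion_exclusion_sum_inf_compl univ
    (fun a => Fintype.piFinset fun _ : ι => ({a}ᶜ : Finset α)) (fun f => ∏ j, p (f j))
  have hsurj : (univ.inf fun a => (Fintype.piFinset fun _ : ι => ({a}ᶜ : Finset α))ᶜ) =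
      univ.filter Surjective := by
    ext f
    simp [Finset.mem_finset_inf, Surjective]
  have hmiss : ∀ T : Finset α,
      (T.inf fun a => Fintype.piFinset fun _ : ι => ({a}ᶜ : Finset α)) =
        Fintype.piFinset fun _ => Tᶜ := by
    intro T
    ext f
    simp only [Finset.mem_finset_inf, Fintype.mem_piFinset, mem_compl, mem_singleton]
    grind
  simp only [hsurj, hmiss, ← prod_univ_sum, prod_const, card_univ, zsmul_eq_mul] at h
  rw [h, ← compl_involutive.bijective.sum_comp]
  simp

theorem sum_prod_not_surjective (p : α → R) :
    ∑ f : ι → α, (if Surjective f then 0 else ∏ j, p (f j)) =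
      ∑ S ∈ (univ : Finset α).powerset.filter (· ≠ univ),
        (-1) ^ (Fintype.card α - #S - 1) * (∑ a ∈ S, p a) ^ Fintype.card ι := by
  rw [sum_ite, sum_const_zero, zero_add,
    eq_sub_of_add_eq (sum_filter_not_add_sum_filter univ Surjective fun f => ∏ j, p (f j)),
    ← Fintype.prod_sum fun _ : ι => p, prod_const, card_univ, sum_prod_surjective, powerset_univ,
    filter_ne', ← add_sum_erase _ _ (mem_univ univ)]
  simp only [compl_univ, card_empty, pow_zero, one_mul, sub_add_cancel_left, ← sum_neg_distrib,
    ← neg_mul]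
  exact sum_congr rfl fun S hS => by rw [neg_neg_one_pow_card_compl (ne_of_mem_erase hS)]

end Surjections

theorem tsum_sum_mul_geometric {ι 𝕜 : Type*} [NormedField 𝕜] [CompleteSpace 𝕜] (s : Finset ι)
    (c q : ι → 𝕜) (hq : ∀ i ∈ s, ‖q i‖ < 1) :
    ∑' n, ∑ i ∈ s, c i * q i ^ n = ∑ i ∈ s, c i / (1 - q i) := by
  rw [Summable.tsum_finsetSum fun i hi => (summable_geometric_of_norm_lt_one (hq i hi)).mul_left _]
  exact sum_congr rfl fun i hi => by
    rw [tsum_mul_left, tsum_geometric_of_norm_lt_one (hq i hi), div_eq_mul_inv]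

theorem abs_sum_lt_one_of_ne_univ {α : Type*} [Fintype α] {p : α → ℝ} (hp : ∀ a, 0 < p a)
    (hsum : ∑ a, p a = 1) {S : Finset α} (hS : S ≠ univ) : |∑ a ∈ S, p a| < 1 := by
  obtain ⟨a, -, ha⟩ := exists_of_ssubset (ssubset_univ_iff.2 hS)
  have hlt : ∑ a ∈ S, p a < ∑ a, p a :=
    sum_lt_sum_of_subset (subset_univ S) (mem_univ a) ha (hp a) fun b _ _ => (hp b).le
  rw [abs_of_nonneg (sum_nonneg fun a _ => (hp a).le)]
  linarith

section Harmonic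

variable {K : Type*} [Field K] [CharZero K]

theorem sum_range_neg_one_pow_mul_choose_div_succ (n : ℕ) :
    ∑ j ∈ range (n + 1), (-1 : K) ^ j * n.choose j / (j + 1) = 1 / (n + 1) := by
  have hchoose : ∀ j, (n.choose j : K) / (j + 1) = (n + 1).choose (j + 1) / (n + 1) := by
    intro j
    rw [div_eq_div_iff (Nat.cast_add_one_ne_zero j) (Nat.cast_add_one_ne_zero n), mul_comm]
    exact_mod_cast Nat.add_one_mul_choose_eq n j
  have halt : ∑ j ∈ range (n + 1), (-1 : K) ^ j * (n + 1).choose (j + 1) = 1 := by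
    have h : ∑ j ∈ range (n + 1 + 1), (-1 : K) ^ j * (n + 1).choose j = 0 := by
      exact_mod_cast Int.alternating_sum_range_choose_of_ne n.succ_ne_zero
    rw [sum_range_succ'] at h
    simp only [pow_succ, mul_neg_one, neg_mul, sum_neg_distrib, Nat.choose_zero_right, pow_zero,
      Nat.cast_one, mul_one] at h
    linear_combination -h
  simp_rw [mul_div_assoc, hchoose, ← mul_div_assoc, ← sum_div, halt]

theorem sum_range_neg_one_pow_mul_choose_succ_div_succ (n : ℕ) :
    ∑ j ∈ range n, (-1 : K) ^ j * n.choose (j + 1) / (j + 1) =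
      ∑ j ∈ range n, (1 : K) / (j + 1) := by
  induction n with
  | zero => simp
  | succ n ih =>
    simp_rw [Nat.choose_succ_succ', Nat.cast_add, mul_add, add_div, sum_add_distrib,
      sum_range_neg_one_pow_mul_choose_div_succ, sum_range_succ _ n, Nat.choose_succ_self, ih]
    push_cast
    ring

end Harmonic

section ProperSubsets

variable {α : Type*} [Fintype α] [DecidableEq α]

theorem sum_filter_ne_univ_apply_card {β : Type*} [AddCommGroup β] (g : ℕ → β) :
    ∑ S ∈ (univ : Finset α).powerset.filter (· ≠ univ), g #S =
      ∑ m ∈ range (Fintype.card α), (Fintype.card α).choose m • g m := by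
  rw [filter_ne', sum_erase_eq_sub (mem_powerset_self univ), sum_powerset_apply_card, card_univ,
    sum_range_succ, Nat.choose_self, one_smul, add_sub_cancel_right]

theorem sum_filter_ne_univ_neg_one_pow_div_one_sub_card_div :
    ∑ S ∈ (univ : Finset α).powerset.filter (· ≠ univ),
        (-1 : ℝ) ^ (Fintype.card α - #S - 1) / (1 - #S / Fintype.card α) =
      Fintype.card α * ∑ j ∈ range (Fintype.card α), (1 : ℝ) / (j + 1) := by
  set k := Fintype.card α
  rw [sum_filter_ne_univ_apply_card fun m => (-1 : ℝ) ^ (k - m - 1) / (1 - m / k),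
    ← sum_range_neg_one_pow_mul_choose_succ_div_succ, mul_sum, ← sum_range_reflect]
  -- after reflecting `m = k - 1 - j`, the `j`-th term is `k (-1)^j C(k, j+1) / (j+1)`
  refine sum_congr rfl fun j hj => ?_
  have hj : j + 1 ≤ k := mem_range.1 hj
  rw [show k - 1 - j = k - (j + 1) by omega, show k - (k - (j + 1)) - 1 = j by omega,
    Nat.choose_symm hj, nsmul_eq_mul, Nat.cast_sub hj]
  have hk : (k : ℝ) ≠ 0 := by exact_mod_cast (by omega : k ≠ 0)
  field_simp
  push_cast
  ring

end ProperSubsets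

theorem couponTailProb_eq (k : ℕ) (p : Fin k → ℝ) (n : ℕ) :
    couponTailProb k p n =
      ∑ I ∈ (univ : Finset (Fin k)).powerset.filter (· ≠ univ),
        (-1 : ℝ) ^ (k - #I - 1) * (∑ i ∈ I, p i) ^ n := by
  rw [couponTailProb, sum_prod_not_surjective]
  simp only [Fintype.card_fin]

theorem couponCollector_expectation_general (k : ℕ) (p : Fin k → ℝ)
    (hp : ∀ i, 0 < p i) (hsum : ∑ i : Fin k, p i = 1) :
    couponCollectorExpectation k p =
      ∑ I ∈ (Finset.univ : Finset (Fin k)).powerset.filter (· ≠ Finset.univ),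
        (-1 : ℝ) ^ (k - I.card - 1) / (1 - ∑ i ∈ I, p i) ∧
    ((∀ i, p i = 1 / k) →
      couponCollectorExpectation k p = k * ∑ i ∈ Finset.range k, (1 : ℝ) / (i + 1)) := by
  have hformula : couponCollectorExpectation k p =
      ∑ I ∈ (univ : Finset (Fin k)).powerset.filter (· ≠ univ),
        (-1 : ℝ) ^ (k - #I - 1) / (1 - ∑ i ∈ I, p i) := by
    rw [couponCollectorExpectation, tsum_congr (couponTailProb_eq k p)]
    exact tsum_sum_mul_geometric _ _ _ fun I hI =>
      abs_sum_lt_one_of_ne_univ hp hsum (mem_filter.1 hI).2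
  refine ⟨hformula, fun huniform => ?_⟩
  have hcard : ∀ I : Finset (Fin k), ∑ i ∈ I, p i = #I / k := fun I => by
    rw [sum_congr rfl fun i _ => huniform i, sum_const, nsmul_eq_mul, mul_one_div]
  simpa [hformula, hcard] using sum_filter_ne_univ_neg_one_pow_div_one_sub_card_div (α := Fin k)

/-- Coupon collector: with `k` coupon types drawn with positive probabilities `p₁,…,p_k` summing
to `1`, the expected number of draws to collect all types is
`∑_{I ⊊ {1,…,k}} (−1)^{k−|I|−1} / (1 − ∑_{i∈I} pᵢ)`; in the uniform case `pᵢ = 1/k` this equals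
`k·(1 + 1/2 + ⋯ + 1/k)`. -/
theorem couponCollector_expectation (k : ℕ) (hk : 0 < k) (p : Fin k → ℝ)
    (hp : ∀ i, 0 < p i) (hsum : ∑ i : Fin k, p i = 1) :
    couponCollectorExpectation k p =
      ∑ I ∈ (Finset.univ : Finset (Fin k)).powerset.filter (· ≠ Finset.univ),
        (-1 : ℝ) ^ (k - I.card - 1) / (1 - ∑ i ∈ I, p i) ∧
    ((∀ i, p i = 1 / k) →
      couponCollectorExpectation k p = k * ∑ i ∈ Finset.range k, (1 : ℝ) / (i + 1)) :=
  couponCollector_expectation_general k p hp hsum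
end
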